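/- arXiv:2512.24302 — 6 statements merged into one kernel-verified Lean document; each statement's English description precedes it below -/
import Mathlib

section
/- Let A ∈ ℤ^{m×n} be a totally unimodular matrix, b ∈ ℤ^m, and let x ∈ ℚ^n satisfy A x = b. Let S = {j : x_j ∉ ℤ} be the set of indices where x is non-integral. If S is nonempty, then the submatrix of A consisting of the columns indexed by S has nontrivial kernel (nullity > 0). -/
/-!
Let `S` be the set of indices where `x` is not integral; a linear dependency among the columns
of `A` indexed by `S` is the required `g`. If these columns were linearly independent, some
choice of rows would make them a nonsingular square matrix `B`, whose determinant is `±1` by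
total unimodularity, so `B⁻¹` is integral. Subtracting from `x` an integral vector agreeing with
it off `S` leaves a vector `y` supported on `S` with `A y` integral, so `y|_S = B⁻¹ (A y)|_rows`
is integral, and so is `x` on `S`: a contradiction, as `S` is nonempty.
-/

open Matrix

namespace Matrix

lemma exists_isUnit_submatrix_of_linearIndependent_col {m n K : Type*} [Fintype m] [Fintype n]
    [DecidableEq n] [Field K] {M : Matrix m n K} (h : LinearIndependent K M.col) :
    ∃ f : n → m, IsUnit (M.submatrix f id) := by
  obtain ⟨κ, a, -, hspan, hli⟩ := exists_linearIndependent' K M.row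
  have : Fintype κ := @Fintype.ofFinite κ hli.finite
  have hcard : Fintype.card n = Fintype.card κ := by
    rw [← h.rank_matrix, M.rank_transpose, M.rank_eq_finrank_span_row, ← hspan,
      finrank_span_eq_card hli]
  let e : n ≃ κ := Fintype.equivOfCardEq hcard
  refine ⟨a ∘ e, ?_⟩
  rw [← linearIndependent_rows_iff_isUnit]
  exact hli.comp e e.injective

lemma mulVec_eq_submatrix_mulVec_of_support {m n R : Type*} [Fintype n]
    [NonUnitalNonAssocSemiring R] (M : Matrix m n R) {p : n → Prop} [DecidablePred p]
    {v : n → R} (hv : ∀ j, ¬ p j → v j = 0) :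
    M *ᵥ v = M.submatrix id (Subtype.val : {j // p j} → n) *ᵥ (fun j => v j) := by
  ext i
  simp only [mulVec, dotProduct, submatrix_apply, id]
  rw [← Fintype.sum_subtype_add_sum_subtype p,
    Finset.sum_eq_zero (s := (Finset.univ : Finset {j // ¬ p j})) fun j _ => by
      rw [hv j j.2, mul_zero], add_zero]

lemma exists_ne_zero_mulVec_eq_zero_of_not_injective_submatrix {m n R : Type*} [Fintype n]
    [CommRing R] (M : Matrix m n R) {p : n → Prop} [DecidablePred p]
    (h : ¬ Function.Injective (M.submatrix id (Subtype.val : {j // p j} → n)).mulVec) :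
    ∃ g : n → R, g ≠ 0 ∧ (∀ j, ¬ p j → g j = 0) ∧ M *ᵥ g = 0 := by
  rw [← coe_mulVecLin, injective_iff_map_eq_zero] at h
  push Not at h
  obtain ⟨g, hg, hg0⟩ := h
  rw [mulVecLin_apply] at hg
  refine ⟨fun j => if h : p j then g ⟨j, h⟩ else 0, fun h0 => hg0 (funext fun k => ?_),
    fun j hj => dif_neg hj, ?_⟩
  · simpa [k.2] using congrFun h0 k
  · have hres : (fun k : {j // p j} => if h : p k then g ⟨k, h⟩ else 0) = g :=
      funext fun k => dif_pos k.2
    rw [mulVec_eq_submatrix_mulVec_of_support M fun j hj => dif_neg hj, hres, hg]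

lemma IsTotallyUnimodular.isUnit_det_of_ne_zero {m n ι R : Type*} [CommRing R] [Fintype ι]
    [DecidableEq ι] {A : Matrix m n R} (hA : A.IsTotallyUnimodular) {f : ι → m} {g : ι → n}
    (h : (A.submatrix f g).det ≠ 0) : IsUnit (A.submatrix f g).det := by
  obtain ⟨s, hs⟩ := (isTotallyUnimodular_iff_fintype A).mp hA ι f g
  cases s with
  | zero => exact absurd hs.symm (by simpa using h)
  | pos => simp [← hs]
  | neg => simp [← hs]

theorem IsTotallyUnimodular.exists_intCast_eq_of_mulVec_eq {m n K : Type*} [Fintype m]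
    [Fintype n] [DecidableEq n] [Field K] {A : Matrix m n ℤ} (hA : A.IsTotallyUnimodular)
    (hinj : Function.Injective (A.map (Int.cast : ℤ → K)).mulVec) {y : n → K} {c : m → ℤ}
    (hy : A.map (Int.cast : ℤ → K) *ᵥ y = fun i => (c i : K)) :
    ∃ z : n → ℤ, y = fun j => (z j : K) := by
  obtain ⟨f, hf⟩ := exists_isUnit_submatrix_of_linearIndependent_col (mulVec_injective_iff.mp hinj)
  set B := A.submatrix f id
  have hBK : (A.map (Int.cast : ℤ → K)).submatrix f id = B.map (Int.castRingHom K) := rfl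
  have hB : IsUnit B.det := by
    refine hA.isUnit_det_of_ne_zero fun h0 => ?_
    rw [hBK, isUnit_iff_isUnit_det, ← RingHom.mapMatrix_apply, ← RingHom.map_det, h0,
      map_zero] at hf
    exact not_isUnit_zero hf
  have hBy : B.map (Int.castRingHom K) *ᵥ y = Int.castRingHom K ∘ c ∘ f := by
    rw [← hBK]
    exact funext fun i => congrFun hy (f i)
  refine ⟨B⁻¹ *ᵥ (c ∘ f), funext fun j => ?_⟩
  calc y j = ((B⁻¹ * B).map (Int.castRingHom K) *ᵥ y) j := by
        rw [nonsing_inv_mul B hB, Matrix.map_one _ (map_zero _) (map_one _), one_mulVec]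
    _ = _ := by
        rw [Matrix.map_mul, ← mulVec_mulVec, hBy, ← RingHom.map_mulVec]
        rfl

end Matrix

/-- For a totally unimodular integer matrix `A` and integral right-hand side `b`,
any rational solution of `A x = b` is either integral or the columns indexed by its
non-integral support admit a nontrivial kernel element. -/
theorem stmt_2 {m n : ℕ} (A : Matrix (Fin m) (Fin n) ℤ)
    (hA : A.IsTotallyUnimodular) (b : Fin m → ℤ) (x : Fin n → ℚ)
    (hx : (A.map (Int.cast : ℤ → ℚ)).mulVec x = fun i => (b i : ℚ))
    (hS : {j : Fin n | ¬ ∃ z : ℤ, x j = (z : ℚ)}.Nonempty) :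
    ∃ g : Fin n → ℚ, g ≠ 0 ∧ (∀ j, (∃ z : ℤ, x j = (z : ℚ)) → g j = 0) ∧
      (A.map (Int.cast : ℤ → ℚ)).mulVec g = 0 := by
  classical
  set p : Fin n → Prop := fun j => ¬ ∃ z : ℤ, x j = z
  set Q := A.map (Int.cast : ℤ → ℚ)
  by_cases hinj : Function.Injective (Q.submatrix id (Subtype.val : {j // p j} → Fin n)).mulVec
  · exfalso
    let r : Fin n → ℤ := fun j => if h : p j then 0 else (not_not.mp h).choose
    have hr : ∀ j, ¬ p j → x j - r j = 0 := fun j hj => by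
      simp only [r, dif_neg hj, ← (not_not.mp hj).choose_spec, sub_self]
    have hQ : Q *ᵥ (fun j => x j - r j) = fun i => ((b - A *ᵥ r) i : ℚ) := by
      ext i
      change (Q *ᵥ (x - Int.castRingHom ℚ ∘ r)) i = _
      rw [mulVec_sub, hx, Pi.sub_apply, Pi.sub_apply, Int.cast_sub]
      exact congrArg _ ((Int.castRingHom ℚ).map_mulVec A r i).symm
    obtain ⟨z, hz⟩ := (hA.submatrix id Subtype.val).exists_intCast_eq_of_mulVec_eq hinj
      ((mulVec_eq_submatrix_mulVec_of_support Q hr).symm.trans hQ)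
    obtain ⟨j₀, hj₀⟩ := hS
    exact hj₀ ⟨z ⟨j₀, hj₀⟩ + r j₀, by push_cast; linarith [congrFun hz ⟨j₀, hj₀⟩]⟩
  · obtain ⟨g, hg0, hgp, hg⟩ := exists_ne_zero_mulVec_eq_zero_of_not_injective_submatrix Q hinj
    exact ⟨g, hg0, fun j hj => hgp j (not_not.mpr hj), hg⟩
end

section
/- Consider the linear program with variables x ∈ ℝ^n and constraints: (i) ∑_{j=1}^n h̃_j x_j = c where h̃_j ∈ ℚ^m, (ii) ∑_{j ∈ I_k} x_j = d_k for each k in a finite index set K, where the sets I_k partition a subset of [n], and (iii) l ≤ x ≤ u. Let x̄ be a vertex solution and let η = |{j : x̄_j ∉ ℤ}| be the size of its non-integral support. If the submatrix of the constraint matrix restricted to the non-integral support columns is non-singular (has linearly independent columns) and all d_k ∈ ℤ, then η ≤ 2m. -/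
/-!
The columns of the non-integral support `S` have nonzero entries only in the `m` rows of (i) and
in the rows of the groups `k` whose `I k` meets `S`; being independent, there are at most `m + t`
of them, `t` the number of such groups. A group cannot meet `S` in exactly one index, since `d k`
and the other summands are integers, so each of these groups contains two indices of `S`, and by
disjointness `2 * t ≤ #S`. Together, `#S ≤ m + #S / 2`.
-/

open Finset

theorem Rat.two_le_card_filter_den_ne_one_of_sum_eq_intCast {ι : Type*} {s : Finset ι}
    {x : ι → ℚ} {d : ℤ} (hsum : ∑ j ∈ s, x j = d) (hne : ∃ j ∈ s, (x j).den ≠ 1) :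
    2 ≤ #{j ∈ s | (x j).den ≠ 1} := by
  classical
  obtain ⟨j₀, hj₀s, hj₀⟩ := hne
  by_contra! hlt
  have hj₀mem : j₀ ∈ {j ∈ s | (x j).den ≠ 1} := mem_filter.mpr ⟨hj₀s, hj₀⟩
  have hsingle : {j ∈ s | (x j).den ≠ 1} = {j₀} :=
    eq_singleton_iff_unique_mem.mpr ⟨hj₀mem, fun j hj => card_le_one.mp (by omega) j hj j₀ hj₀mem⟩
  have hsplit := sum_filter_add_sum_filter_not s (fun j => (x j).den ≠ 1) x
  simp only [hsingle, sum_singleton, not_not] at hsplit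
  have hint : ∑ j ∈ s with (x j).den = 1, x j = ((∑ j ∈ s with (x j).den = 1, (x j).num : ℤ) : ℚ) := by
    push_cast
    exact sum_congr rfl fun j hj => (Rat.coe_int_num_of_den_eq_one (mem_filter.mp hj).2).symm
  have : x j₀ = ((d - ∑ j ∈ s with (x j).den = 1, (x j).num : ℤ) : ℚ) := by
    push_cast at hint ⊢; linarith
  exact hj₀ (this ▸ Rat.den_intCast _)

theorem Finset.mul_card_le_card_of_pairwiseDisjoint {κ α : Type*} [DecidableEq α]
    {T : Finset κ} {A : κ → Finset α} {S : Finset α} {n : ℕ}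
    (hA : ∀ k ∈ T, n ≤ #(A k)) (hdisj : (T : Set κ).PairwiseDisjoint A)
    (hsub : ∀ k ∈ T, A k ⊆ S) : n * #T ≤ #S :=
  calc n * #T = ∑ _k ∈ T, n := by rw [sum_const, smul_eq_mul, mul_comm]
    _ ≤ ∑ k ∈ T, #(A k) := sum_le_sum hA
    _ = #(T.biUnion A) := (card_biUnion hdisj).symm
    _ ≤ #S := card_le_card (biUnion_subset.mpr hsub)

theorem LinearIndependent.restrict_of_forall_notMem_eq_zero {J α R : Type*} [Ring R]
    {v : J → α → R} (hv : LinearIndependent R v) {s : Set α}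
    (hs : ∀ j, ∀ a ∉ s, v j a = 0) : LinearIndependent R (fun j (a : s) => v j a) := by
  rw [linearIndependent_iff'] at hv ⊢
  refine fun t g hg => hv t g (funext fun a => ?_)
  by_cases ha : a ∈ s
  · simpa [Finset.sum_apply] using congrFun hg ⟨a, ha⟩
  · simp [Finset.sum_apply, hs _ a ha]

theorem LinearIndependent.card_le_card_of_forall_notMem_eq_zero {J α R : Type*} [Fintype J]
    [Ring R] [StrongRankCondition R] {v : J → α → R} (hv : LinearIndependent R v)
    (s : Finset α) (hs : ∀ j, ∀ a ∉ s, v j a = 0) : Fintype.card J ≤ #s := by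
  simpa using (hv.restrict_of_forall_notMem_eq_zero (s := s) hs).fintype_card_le_finrank

theorem stmt_4_general {m n : ℕ} {K : Type*} [Fintype K]
    (htil : Fin n → Fin m → ℚ)
    (I : K → Finset (Fin n)) (hdisj : ∀ k k', k ≠ k' → Disjoint (I k) (I k'))
    (d : K → ℤ) (xbar : Fin n → ℚ)
    (hc2 : ∀ k : K, ∑ j ∈ I k, xbar j = (d k : ℚ))
    (S : Finset (Fin n)) (hSdef : S = Finset.univ.filter (fun j => (xbar j).den ≠ 1))
    (hind : LinearIndependent ℚ
      (fun j : {j : Fin n // j ∈ S} =>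
        (Sum.elim (fun i : Fin m => htil j.val i)
          (fun k : K => if j.val ∈ I k then (1 : ℚ) else 0) : Fin m ⊕ K → ℚ))) :
    S.card ≤ 2 * m := by
  classical
  set touched : Finset K := {k | (I k ∩ S).Nonempty}
  have hI_inter_S (k : K) : I k ∩ S = {j ∈ I k | (xbar j).den ≠ 1} := by
    ext j; simp [hSdef]
  have hcount : 2 * #touched ≤ #S := by
    refine mul_card_le_card_of_pairwiseDisjoint (fun k hk => ?_)
      (fun k _ k' _ hne => (hdisj k k' hne).mono inter_subset_left inter_subset_left)
      (fun _ _ => inter_subset_right)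
    obtain ⟨j, hj⟩ := (mem_filter.mp hk).2
    rw [hI_inter_S] at hj ⊢
    exact Rat.two_le_card_filter_den_ne_one_of_sum_eq_intCast (hc2 k) ⟨j, (mem_filter.mp hj)⟩
  have hrank : #S ≤ m + #touched := by
    have hsupp := hind.card_le_card_of_forall_notMem_eq_zero (univ.disjSum touched) <| by
      rintro j (i | k) h
      · simp at h
      · have : j.val ∉ I k := fun hj => h (by simpa [touched] using ⟨j.val, mem_inter.mpr ⟨hj, j.2⟩⟩)
        simp [this]
    simpa using hsupp
  omega

/-- For a vertex solution of the LP with `m` coupling constraints, disjoint group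
constraints with integral right-hand sides, and box constraints, the non-integral
support has size at most `2m`. -/
theorem stmt_4 {m n : ℕ} {K : Type*} [Fintype K] [DecidableEq K]
    (htil : Fin n → Fin m → ℚ) (c : Fin m → ℚ)
    (I : K → Finset (Fin n)) (hdisj : ∀ k k', k ≠ k' → Disjoint (I k) (I k'))
    (d : K → ℤ) (l u : Fin n → ℚ) (xbar : Fin n → ℚ)
    (hc1 : ∀ i : Fin m, ∑ j : Fin n, xbar j • htil j i = c i)
    (hc2 : ∀ k : K, ∑ j ∈ I k, xbar j = (d k : ℚ))
    (hbox : ∀ j, l j ≤ xbar j ∧ xbar j ≤ u j)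
    (S : Finset (Fin n)) (hSdef : S = Finset.univ.filter (fun j => (xbar j).den ≠ 1))
    (hind : LinearIndependent ℚ
      (fun j : {j : Fin n // j ∈ S} =>
        (Sum.elim (fun i : Fin m => htil j.val i)
          (fun k : K => if j.val ∈ I k then (1 : ℚ) else 0) : Fin m ⊕ K → ℚ))) :
    S.card ≤ 2 * m :=
  stmt_4_general htil I hdisj d xbar hc2 S hSdef hind
end

section
/- Let A_Σ be the block diagonal matrix diag(A_1, ..., A_ρ) where each A_k is the constraint matrix of an assignment system with at most τ 'column-sum' constraints (as in the n-fold configuration-LP), and let ẑ be a solution to A_Σ z = b with integral right-hand side b. Let B_Σ be A_Σ restricted to the columns in the non-integral support of ẑ. Then nullity(B_Σ) ≥ |nisupp(ẑ)| / (2τ + 1). -/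
/-!
Read `z` as weights on the edges of a bipartite graph whose vertices are the rows `⟨k, inl i⟩`
and the columns `⟨k, inr j⟩` of the blocks; `B` is the incidence matrix of the subgraph of
non-integral edges `S`. Since row and column sums are integral, every vertex met by `S` meets at
least two edges of `S`, so `S` meets `R ≤ |S|/2` row vertices and `T ≤ min (|S|/2, τ b)` column
vertices, where `b` is the number of blocks met by `S`. The left kernel of `B` contains the unit
vectors of the untouched vertices and, for each of these `b` blocks, the vector that is `1` on
its touched rows and `-1` on its touched columns. These have disjoint supports, hence
`nullity B ≥ |S| - R - T + b ≥ |S| / (2τ)`.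
-/

open Finset Module Matrix

theorem Rat.exists_ne_den_ne_one_of_den_sum_eq_one {ι : Type*} [Fintype ι] [DecidableEq ι]
    (f : ι → ℚ) (hsum : (∑ j, f j).den = 1) {i : ι} (hi : (f i).den ≠ 1) :
    ∃ j ≠ i, (f j).den ≠ 1 := by
  have hint (q : ℚ) : q.den = 1 ↔ q ∈ (Int.castRingHom ℚ).range :=
    ⟨fun h => ⟨q.num, (Rat.den_eq_one_iff q).1 h⟩, by rintro ⟨n, rfl⟩; exact Rat.den_intCast n⟩
  by_contra! h
  refine hi ((hint _).2 ?_)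
  rw [← sub_sub_cancel (∑ j, f j) (f i), ← sum_erase_eq_sub (mem_univ i)]
  exact sub_mem ((hint _).1 hsum) (sum_mem fun j hj => (hint _).1 (h j (ne_of_mem_erase hj)))

theorem Finset.two_mul_card_image_le_card {α β : Type*} [DecidableEq β] {f : α → β}
    {s : Finset α} (h : ∀ a ∈ s, ∃ b ∈ s, b ≠ a ∧ f b = f a) : 2 * #(s.image f) ≤ #s := by
  refine mul_card_image_le_card s 2 fun y hy => ?_
  obtain ⟨a, ha, rfl⟩ := mem_image.1 hy
  obtain ⟨b, hb, hba, hfb⟩ := h a ha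
  exact one_lt_card.2 ⟨b, mem_filter.2 ⟨hb, hfb⟩, a, mem_filter.2 ⟨ha, rfl⟩, hba⟩

namespace Matrix

variable {K m n ι : Type*} [Field K] [Fintype m] [Fintype n] [Fintype ι]

theorem card_add_card_le_finrank_ker_add_card (B : Matrix m n K)
    (L : (ι → K) →ₗ[K] m → K) (hL : Function.Injective L) (hLB : ∀ c, L c ᵥ* B = 0) :
    Fintype.card n + Fintype.card ι ≤ finrank K (LinearMap.ker B.mulVecLin) + Fintype.card m := by
  have hB := LinearMap.finrank_range_add_finrank_ker B.mulVecLin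
  have hBt := LinearMap.finrank_range_add_finrank_ker Bᵀ.mulVecLin
  have hrange : LinearMap.range L ≤ LinearMap.ker Bᵀ.mulVecLin := by
    rintro _ ⟨c, rfl⟩
    simp [hLB]
  have hL' := (LinearMap.finrank_range_of_inj hL).symm.trans_le (Submodule.finrank_mono hrange)
  have htr := rank_transpose B
  rw [finrank_pi] at hB hBt hL'
  unfold rank at htr
  omega

/-- The fibres of `π`, signed by `σ`, are linearly independent vectors of the left kernel. -/
theorem card_add_card_le_finrank_ker_add_card_of_incidence [DecidableEq m] (B : Matrix m n K)
    (s t : n → m) (hB : ∀ e, Bᵀ e = Pi.single (s e) 1 + Pi.single (t e) 1)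
    (σ : m → K) (hσ : ∀ v, σ v ≠ 0) (hσst : ∀ e, σ (s e) + σ (t e) = 0)
    (π : m → ι) (hπ : Function.Surjective π) (hπst : ∀ e, π (s e) = π (t e)) :
    Fintype.card n + Fintype.card ι ≤ finrank K (LinearMap.ker B.mulVecLin) + Fintype.card m := by
  let L : (ι → K) →ₗ[K] m → K := LinearMap.pi fun v => σ v • LinearMap.proj (π v)
  have hL (c : ι → K) (v : m) : L c v = σ v * c (π v) := rfl
  refine B.card_add_card_le_finrank_ker_add_card L ?_ fun c => funext fun e => ?_
  · refine (injective_iff_map_eq_zero L).2 fun c hc => funext <| hπ.forall.2 fun v => ?_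
    simpa [hL, hσ v] using congrFun hc v
  · change L c ⬝ᵥ Bᵀ e = 0
    rw [hB, dotProduct_add, dotProduct_single, dotProduct_single, hL, hL, hπst, mul_one, mul_one,
      ← add_mul, hσst, zero_mul]

end Matrix

def nonintegralSupport {ι : Type*} [Fintype ι] (z : ι → ℚ) : Finset ι :=
  univ.filter fun p => (z p).den ≠ 1

namespace BlockAssignment

variable {κ : Type*} {α : κ → Type*} {β : Type*}

def rowVertex (e : Σ k, α k × β) : Σ k, α k ⊕ β := ⟨e.1, .inl e.2.1⟩

def colVertex (e : Σ k, α k × β) : Σ k, α k ⊕ β := ⟨e.1, .inr e.2.2⟩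

variable [DecidableEq κ] [∀ k, DecidableEq (α k)] [DecidableEq β]

theorem transpose_eq_single_rowVertex_add_single_colVertex {K : Type*} [Field K]
    {S : Finset (Σ k, α k × β)} (B : Matrix (Σ k, α k ⊕ β) S K)
    (hB1 : ∀ k i c, B ⟨k, .inl i⟩ c =
      if (⟨k, i⟩ : Σ k', α k') = ⟨c.val.1, c.val.2.1⟩ then 1 else 0)
    (hB2 : ∀ k j c, B ⟨k, .inr j⟩ c = if k = c.val.1 ∧ j = c.val.2.2 then 1 else 0) (e : S) :
    Bᵀ e = Pi.single (rowVertex e.1) 1 + Pi.single (colVertex e.1) 1 := by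
  obtain ⟨⟨k, i, j⟩, he⟩ := e
  ext ⟨k', v | v⟩ <;> obtain rfl | hk := eq_or_ne k' k <;>
    simp [rowVertex, colVertex, Pi.single_apply, *]

theorem card_image_colVertex_le [Fintype β] (S : Finset (Σ k, α k × β)) :
    #(S.image colVertex) ≤ Fintype.card β * #(S.image Sigma.fst) := by
  have himage : (S.image colVertex).image Sigma.fst = S.image Sigma.fst := by
    rw [image_image]; rfl
  refine himage ▸ card_le_mul_card_image _ _ fun k _ => ?_
  have hsub : {v ∈ S.image colVertex | v.1 = k} ⊆
      univ.image fun j : β => (⟨k, .inr j⟩ : Σ k, α k ⊕ β) := by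
    intro v hv
    obtain ⟨hvS, rfl⟩ := mem_filter.1 hv
    obtain ⟨e, -, rfl⟩ := mem_image.1 hvS
    exact mem_image_of_mem _ (mem_univ _)
  exact (card_le_card hsub).trans (card_image_le.trans card_univ.le)

variable [Fintype κ] [∀ k, Fintype (α k)] [Fintype β]

theorem two_mul_card_image_rowVertex_le (z : (Σ k, α k × β) → ℚ)
    (hrow : ∀ k i, (∑ j, z ⟨k, (i, j)⟩).den = 1) :
    2 * #((nonintegralSupport z).image rowVertex) ≤ #(nonintegralSupport z) := by
  refine two_mul_card_image_le_card fun ⟨k, i, j⟩ he => ?_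
  obtain ⟨j', hj', hz⟩ := Rat.exists_ne_den_ne_one_of_den_sum_eq_one _ (hrow k i)
    (mem_filter.1 he).2
  exact ⟨⟨k, i, j'⟩, mem_filter.2 ⟨mem_univ _, hz⟩, by simpa using hj', rfl⟩

theorem two_mul_card_image_colVertex_le (z : (Σ k, α k × β) → ℚ)
    (hcol : ∀ k j, (∑ i, z ⟨k, (i, j)⟩).den = 1) :
    2 * #((nonintegralSupport z).image colVertex) ≤ #(nonintegralSupport z) := by
  refine two_mul_card_image_le_card fun ⟨k, i, j⟩ he => ?_
  obtain ⟨i', hi', hz⟩ := Rat.exists_ne_den_ne_one_of_den_sum_eq_one _ (hcol k j)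
    (mem_filter.1 he).2
  exact ⟨⟨k, i', j⟩, mem_filter.2 ⟨mem_univ _, hz⟩, by simpa using hi', rfl⟩

theorem card_add_card_image_fst_le {K : Type*} [Field K]
    (S : Finset (Σ k, α k × β)) (B : Matrix (Σ k, α k ⊕ β) S K)
    (hB : ∀ e : S, Bᵀ e = Pi.single (rowVertex e.1) 1 + Pi.single (colVertex e.1) 1) :
    #S + #(S.image Sigma.fst) ≤ finrank K (LinearMap.ker B.mulVecLin) +
      #(S.image rowVertex) + #(S.image colVertex) := by
  set V := S.image rowVertex ∪ S.image colVertex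
  have hV : ∀ v ∈ V, v.1 ∈ S.image Sigma.fst := by
    simp only [V, mem_union, mem_image]
    rintro v (⟨e, he, rfl⟩ | ⟨e, he, rfl⟩) <;> exact ⟨e, he, rfl⟩
  let π (v : Σ k, α k ⊕ β) : {v // v ∉ V} ⊕ S.image Sigma.fst :=
    if h : v ∈ V then .inr ⟨v.1, hV v h⟩ else .inl ⟨v, h⟩
  have hπ : Function.Surjective π := by
    rintro (⟨v, hv⟩ | ⟨k, hk⟩)
    · exact ⟨v, dif_neg hv⟩
    · obtain ⟨e, he, rfl⟩ := mem_image.1 hk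
      exact ⟨rowVertex e, dif_pos (mem_union_left _ (mem_image_of_mem _ he))⟩
  have hπst (e : S) : π (rowVertex e.1) = π (colVertex e.1) := by
    have hrow : rowVertex e.1 ∈ V := mem_union_left _ (mem_image_of_mem _ e.2)
    have hcol : colVertex e.1 ∈ V := mem_union_right _ (mem_image_of_mem _ e.2)
    simp only [π, dif_pos hrow, dif_pos hcol]
    rfl
  have h := B.card_add_card_le_finrank_ker_add_card_of_incidence _ _ hB
    (fun v => v.2.elim (fun _ => 1) fun _ => -1) (fun ⟨_, v⟩ => by cases v <;> simp)
    (fun _ => add_neg_cancel 1) π hπ hπst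
  rw [Fintype.card_coe, Fintype.card_sum, Fintype.card_subtype_compl, Fintype.card_coe,
    Fintype.card_coe] at h
  have : #V ≤ #(S.image rowVertex) + #(S.image colVertex) := card_union_le _ _
  have := card_le_univ V
  omega

end BlockAssignment

open BlockAssignment

/-- Block-diagonal assignment system: the nullity of the constraint matrix restricted
to the non-integral support of a solution with integral right-hand sides is at least
`|nisupp| / (2τ + 1)`. -/
theorem stmt_6 {ρ τ : ℕ} (ℓ : Fin ρ → ℕ)
    (z : (Σ k : Fin ρ, Fin (ℓ k) × Fin τ) → ℚ) (y : (k : Fin ρ) → Fin τ → ℤ)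
    (hrow : ∀ (k : Fin ρ) (i : Fin (ℓ k)), ∑ j : Fin τ, z ⟨k, (i, j)⟩ = 1)
    (hcol : ∀ (k : Fin ρ) (j : Fin τ), ∑ i : Fin (ℓ k), z ⟨k, (i, j)⟩ = (y k j : ℚ))
    (S : Finset (Σ k : Fin ρ, Fin (ℓ k) × Fin τ))
    (hS : S = Finset.univ.filter (fun p => (z p).den ≠ 1))
    (B : Matrix (Σ k : Fin ρ, Fin (ℓ k) ⊕ Fin τ)
      {p : Σ k : Fin ρ, Fin (ℓ k) × Fin τ // p ∈ S} ℚ)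
    (hB1 : ∀ (k : Fin ρ) (i : Fin (ℓ k)) (c),
      B ⟨k, Sum.inl i⟩ c =
        if (⟨k, i⟩ : Σ k' : Fin ρ, Fin (ℓ k')) = ⟨c.val.1, c.val.2.1⟩ then 1 else 0)
    (hB2 : ∀ (k : Fin ρ) (j : Fin τ) (c),
      B ⟨k, Sum.inr j⟩ c = if k = c.val.1 ∧ j = c.val.2.2 then 1 else 0) :
    (S.card : ℚ) / (2 * τ + 1) ≤
      (Module.finrank ℚ ↥(LinearMap.ker B.mulVecLin) : ℚ) := by
  obtain rfl | hτ := Nat.eq_zero_or_pos τ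
  · simp [card_eq_zero.2 (S.eq_empty_of_forall_notMem fun p _ => p.2.2.elim0)]
  obtain rfl : S = nonintegralSupport z := hS
  have hrows := two_mul_card_image_rowVertex_le z fun k i => by rw [hrow k i]; rfl
  have hcols := two_mul_card_image_colVertex_le z fun k j => by
    rw [hcol k j]; exact Rat.den_intCast _
  have hblocks := card_image_colVertex_le (α := fun k => Fin (ℓ k)) (nonintegralSupport z)
  have hnullity := card_add_card_image_fst_le _ B
    (transpose_eq_single_rowVertex_add_single_colVertex B hB1 hB2)
  rw [Fintype.card_fin] at hblocks
  have hcard : #(nonintegralSupport z) ≤ 2 * τ * finrank ℚ (LinearMap.ker B.mulVecLin) := by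
    nlinarith
  rw [div_le_iff₀ (by positivity)]
  have : (#(nonintegralSupport z) : ℚ) ≤ 2 * τ * finrank ℚ (LinearMap.ker B.mulVecLin) := by
    exact_mod_cast hcard
  nlinarith [(finrank ℚ (LinearMap.ker B.mulVecLin)).cast_nonneg (α := ℚ)]
end

section
/- Let z be a vertex solution of the combined linear system consisting of (i) s linear constraints C z = b_C and (ii) a block-diagonal totally unimodular assignment system A_Σ z = b_A with integral right-hand side, where each block has τ column-sum constraints. If the columns of the combined constraint matrix restricted to the non-integral support of z are linearly independent, then |nisupp(z)| ≤ s(2τ + 1). -/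
open Finset

private lemma sum_int_aux {α : Type*} (s : Finset α) (f : α → ℚ)
    (h : ∀ a ∈ s, ∃ n : ℤ, f a = n) : ∃ n : ℤ, ∑ a ∈ s, f a = n := by
  classical
  induction s using Finset.cons_induction with
  | empty => exact ⟨0, by simp⟩
  | cons a s ha ih =>
    obtain ⟨n, hn⟩ := h a (Finset.mem_cons_self a s)
    obtain ⟨m, hm⟩ := ih (fun b hb => h b (Finset.mem_cons.2 (Or.inr hb)))
    exact ⟨n + m, by rw [Finset.sum_cons, hn, hm]; push_cast; ring⟩

private lemma num_block (τ R T' E : ℕ) (hR : 2 * R ≤ E) (hT : 2 * (T' + 1) ≤ E)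
    (hτ : T' + 1 ≤ τ) :
    (2 * τ + 1) * (R + T') ≤ 2 * τ * E := by
  rcases le_or_gt E (2 * τ + 1) with h | h
  · nlinarith
  · nlinarith

private def colFam {s ρ τ : ℕ} (ℓ : Fin ρ → ℕ)
    (C : Matrix (Fin s) (Σ k : Fin ρ, Fin (ℓ k) × Fin τ) ℚ)
    (S : Finset (Σ k : Fin ρ, Fin (ℓ k) × Fin τ))
    (c : {p : Σ k : Fin ρ, Fin (ℓ k) × Fin τ // p ∈ S}) :
    Fin s ⊕ (Σ k : Fin ρ, Fin (ℓ k) ⊕ Fin τ) → ℚ :=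
  Sum.elim (fun i : Fin s => C i c.val)
    (fun r : Σ k : Fin ρ, Fin (ℓ k) ⊕ Fin τ =>
      Sum.elim
        (fun i => if (⟨r.1, i⟩ : Σ k' : Fin ρ, Fin (ℓ k')) = ⟨c.val.1, c.val.2.1⟩
          then (1 : ℚ) else 0)
        (fun j => if r.1 = c.val.1 ∧ j = c.val.2.2 then (1 : ℚ) else 0) r.2)

private lemma colFam_inl {s ρ τ : ℕ} (ℓ : Fin ρ → ℕ) (C) (S) (c) (i : Fin s) :
    colFam (τ := τ) ℓ C S c (Sum.inl i) = C i c.val := rfl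

private lemma colFam_row {s ρ τ : ℕ} (ℓ : Fin ρ → ℕ) (C) (S) (c) (k : Fin ρ)
    (i : Fin (ℓ k)) :
    colFam (s := s) (τ := τ) ℓ C S c (Sum.inr ⟨k, Sum.inl i⟩)
      = if (⟨k, i⟩ : Σ k' : Fin ρ, Fin (ℓ k')) = ⟨c.val.1, c.val.2.1⟩
          then (1 : ℚ) else 0 := rfl

private lemma colFam_col {s ρ τ : ℕ} (ℓ : Fin ρ → ℕ) (C) (S) (c) (k : Fin ρ)
    (j : Fin τ) :
    colFam (s := s) ℓ C S c (Sum.inr ⟨k, Sum.inr j⟩)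
      = if k = c.val.1 ∧ j = c.val.2.2 then (1 : ℚ) else 0 := rfl

/-- Combined system: `s` coupling constraints plus a block-diagonal assignment system
with integral right-hand sides. If the columns of the combined constraint matrix on the
non-integral support of a solution are linearly independent (as at a vertex), then the
non-integral support has size at most `s(2τ+1)`. -/
theorem stmt_8 {s ρ τ : ℕ} (ℓ : Fin ρ → ℕ)
    (C : Matrix (Fin s) (Σ k : Fin ρ, Fin (ℓ k) × Fin τ) ℚ)
    (bC : Fin s → ℚ)
    (z : (Σ k : Fin ρ, Fin (ℓ k) × Fin τ) → ℚ) (y : (k : Fin ρ) → Fin τ → ℤ)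
    (hC : C.mulVec z = bC)
    (hrow : ∀ (k : Fin ρ) (i : Fin (ℓ k)), ∑ j : Fin τ, z ⟨k, (i, j)⟩ = 1)
    (hcol : ∀ (k : Fin ρ) (j : Fin τ), ∑ i : Fin (ℓ k), z ⟨k, (i, j)⟩ = (y k j : ℚ))
    (S : Finset (Σ k : Fin ρ, Fin (ℓ k) × Fin τ))
    (hS : S = Finset.univ.filter (fun p => (z p).den ≠ 1))
    (hind : LinearIndependent ℚ
      (fun c : {p : Σ k : Fin ρ, Fin (ℓ k) × Fin τ // p ∈ S} =>
        (Sum.elim (fun i : Fin s => C i c.val)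
          (fun r : Σ k : Fin ρ, Fin (ℓ k) ⊕ Fin τ =>
            Sum.elim
              (fun i => if (⟨r.1, i⟩ : Σ k' : Fin ρ, Fin (ℓ k')) = ⟨c.val.1, c.val.2.1⟩
                then (1 : ℚ) else 0)
              (fun j => if r.1 = c.val.1 ∧ j = c.val.2.2 then (1 : ℚ) else 0) r.2) :
          Fin s ⊕ (Σ k : Fin ρ, Fin (ℓ k) ⊕ Fin τ) → ℚ))) :
    S.card ≤ s * (2 * τ + 1) := by
  classical
  have hind' : LinearIndependent ℚ (colFam ℓ C S) := hind
  clear hind hC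
  have hmem : ∀ p, p ∈ S ↔ (z p).den ≠ 1 := by subst hS; intro p; simp
  have hint : ∀ p, p ∉ S → ∃ n : ℤ, z p = n := by
    intro p hp
    have hd : (z p).den = 1 := by by_contra h; exact hp ((hmem p).2 h)
    exact ⟨(z p).num, ((Rat.den_eq_one_iff _).1 hd).symm⟩
  set Sk : (k : Fin ρ) → Finset (Fin (ℓ k) × Fin τ) :=
    fun k => Finset.univ.filter
      (fun q => (⟨k, q⟩ : Σ k : Fin ρ, Fin (ℓ k) × Fin τ) ∈ S) with hSk
  set Rs : (k : Fin ρ) → Finset (Fin (ℓ k)) := fun k => (Sk k).image Prod.fst with hRs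
  set Ts : Fin ρ → Finset (Fin τ) := fun k => (Sk k).image Prod.snd with hTs
  set TD : Fin ρ → Finset (Fin τ) :=
    fun k => if h : (Ts k).Nonempty then (Ts k).erase ((Ts k).min' h) else ∅ with hTD
  -- each touched row has ≥ 2 fractional entries
  have hrow2 : ∀ k : Fin ρ, ∀ i ∈ Rs k,
      2 ≤ ((Sk k).filter (fun q => q.1 = i)).card := by
    intro k i hi
    obtain ⟨⟨i0, j0⟩, hq, hq1⟩ := Finset.mem_image.1 hi
    simp only at hq1
    subst hq1
    have hqS : (⟨i0, ((i0, j0) : Fin (ℓ k) × Fin τ).2⟩ : Fin (ℓ k) × Fin τ) ∈ Sk k := hq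
    have h2 : ∃ j1, j1 ≠ j0 ∧ ((i0, j1) : Fin (ℓ k) × Fin τ) ∈ Sk k := by
      by_contra hcon
      push_neg at hcon
      have hz0 : (z ⟨k, (i0, j0)⟩).den ≠ 1 := by
        have := (Finset.mem_filter.1 hq).2
        exact (hmem _).1 this
      obtain ⟨n, hn⟩ := sum_int_aux (Finset.univ.erase j0) (fun j => z ⟨k, (i0, j)⟩)
        (by
          intro j hj
          refine hint _ (fun hS' => ?_)
          exact hcon j (Finset.mem_erase.1 hj).1
            (Finset.mem_filter.2 ⟨Finset.mem_univ _, hS'⟩))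
      have hsum := hrow k i0
      rw [← Finset.add_sum_erase _ _ (Finset.mem_univ j0)] at hsum
      have hz0' : z ⟨k, (i0, j0)⟩ = ((1 - n : ℤ) : ℚ) := by
        push_cast
        linarith [hn ▸ hsum]
      rw [hz0'] at hz0
      exact hz0 (Rat.den_intCast _)
    obtain ⟨j1, hj1, hj1S⟩ := h2
    exact Finset.one_lt_card.2 ⟨(i0, j0), Finset.mem_filter.2 ⟨hq, rfl⟩,
      (i0, j1), Finset.mem_filter.2 ⟨hj1S, rfl⟩,
      by simp [Prod.ext_iff, hj1.symm]⟩
  -- each touched column has ≥ 2 fractional entries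
  have hcol2 : ∀ k : Fin ρ, ∀ j ∈ Ts k,
      2 ≤ ((Sk k).filter (fun q => q.2 = j)).card := by
    intro k j hj
    obtain ⟨⟨i0, j0⟩, hq, hq1⟩ := Finset.mem_image.1 hj
    simp only at hq1
    subst hq1
    have h2 : ∃ i1, i1 ≠ i0 ∧ ((i1, j0) : Fin (ℓ k) × Fin τ) ∈ Sk k := by
      by_contra hcon
      push_neg at hcon
      have hz0 : (z ⟨k, (i0, j0)⟩).den ≠ 1 := (hmem _).1 (Finset.mem_filter.1 hq).2
      obtain ⟨n, hn⟩ := sum_int_aux (Finset.univ.erase i0) (fun i => z ⟨k, (i, j0)⟩)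
        (by
          intro i hi
          refine hint _ (fun hS' => ?_)
          exact hcon i (Finset.mem_erase.1 hi).1
            (Finset.mem_filter.2 ⟨Finset.mem_univ _, hS'⟩))
      have hsum := hcol k j0
      rw [← Finset.add_sum_erase _ _ (Finset.mem_univ i0)] at hsum
      have hz0' : z ⟨k, (i0, j0)⟩ = ((y k j0 - n : ℤ) : ℚ) := by
        push_cast
        linarith [hn ▸ hsum]
      rw [hz0'] at hz0
      exact hz0 (Rat.den_intCast _)
    obtain ⟨i1, hi1, hi1S⟩ := h2
    exact Finset.one_lt_card.2 ⟨(i0, j0), Finset.mem_filter.2 ⟨hq, rfl⟩,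
      (i1, j0), Finset.mem_filter.2 ⟨hi1S, rfl⟩,
      by simp [Prod.ext_iff]; exact fun h => (hi1 h.symm).elim⟩
  -- cardinality bookkeeping
  have hsumS : ∑ k, (Sk k).card = S.card := by
    rw [← Finset.card_sigma]
    congr 1
    ext ⟨k, q⟩
    simp [hSk]
  have hRcard : ∀ k, 2 * (Rs k).card ≤ (Sk k).card := by
    intro k
    calc 2 * (Rs k).card = ∑ _i ∈ Rs k, 2 := by
          rw [Finset.sum_const, smul_eq_mul, mul_comm]
      _ ≤ ∑ i ∈ Rs k, ((Sk k).filter (fun q => q.1 = i)).card :=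
          Finset.sum_le_sum (hrow2 k)
      _ = (Sk k).card :=
          (Finset.card_eq_sum_card_fiberwise
            (fun q hq => Finset.mem_image_of_mem Prod.fst hq)).symm
  have hTcard : ∀ k, 2 * (Ts k).card ≤ (Sk k).card := by
    intro k
    calc 2 * (Ts k).card = ∑ _j ∈ Ts k, 2 := by
          rw [Finset.sum_const, smul_eq_mul, mul_comm]
      _ ≤ ∑ j ∈ Ts k, ((Sk k).filter (fun q => q.2 = j)).card :=
          Finset.sum_le_sum (hcol2 k)
      _ = (Sk k).card :=
          (Finset.card_eq_sum_card_fiberwise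
            (fun q hq => Finset.mem_image_of_mem Prod.snd hq)).symm
  have hTτ : ∀ k, (Ts k).card ≤ τ := fun k =>
    le_trans (Finset.card_le_univ _) (by simp)
  have hblock : ∀ k, (2 * τ + 1) * ((Rs k).card + (TD k).card)
      ≤ 2 * τ * (Sk k).card := by
    intro k
    rcases Finset.eq_empty_or_nonempty (Sk k) with he | hne
    · have h1 : Rs k = ∅ := by rw [hRs]; simp [he]
      have h2 : Ts k = ∅ := by rw [hTs]; simp [he]
      have h3 : TD k = ∅ := by rw [hTD]; simp [h2]
      simp [h1, h3]
    · have hTne : (Ts k).Nonempty := hne.image _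
      have hRne : (Rs k).Nonempty := hne.image _
      have hTDc : (TD k).card = (Ts k).card - 1 := by
        rw [hTD]
        simp only [dif_pos hTne]
        exact Finset.card_erase_of_mem (Finset.min'_mem _ _)
      obtain ⟨T', hT'⟩ : ∃ T', (Ts k).card = T' + 1 :=
        ⟨(Ts k).card - 1, (Nat.succ_pred_eq_of_pos (Finset.card_pos.2 hTne)).symm⟩
      rw [hTDc, hT']
      simp only [Nat.add_sub_cancel]
      exact num_block τ _ T' _ (hRcard k) (hT' ▸ hTcard k) (hT' ▸ hTτ k)
  -- the set of kept coordinates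
  set Dfin : Finset (Fin s ⊕ (Σ k : Fin ρ, Fin (ℓ k) ⊕ Fin τ)) :=
    (Finset.univ : Finset (Fin s)).disjSum
      ((Finset.univ : Finset (Fin ρ)).sigma (fun k => (Rs k).disjSum (TD k)))
    with hDfin
  have hDcard : Dfin.card = s + ∑ k, ((Rs k).card + (TD k).card) := by
    rw [hDfin, Finset.card_disjSum, Finset.card_sigma]
    simp [Finset.card_disjSum]
  -- restricted family is linearly independent
  have hw : LinearIndependent ℚ
      (fun c : {p : Σ k : Fin ρ, Fin (ℓ k) × Fin τ // p ∈ S} =>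
        fun d : ↥Dfin => colFam ℓ C S c d.val) := by
    rw [Fintype.linearIndependent_iff] at hind' ⊢
    intro g hg
    have hg' : ∀ d ∈ Dfin, ∑ c, g c * colFam ℓ C S c d = 0 := by
      intro d hd
      have := congrFun hg ⟨d, hd⟩
      simpa [Finset.sum_apply] using this
    refine hind' g ?_
    funext x
    rw [Finset.sum_apply]
    simp only [Pi.smul_apply, smul_eq_mul, Pi.zero_apply]
    rcases x with i | ⟨k, i | j⟩
    · exact hg' (Sum.inl i) (by simp [hDfin])
    · by_cases hiR : i ∈ Rs k
      · exact hg' _ (by simp [hDfin, Finset.mem_sigma, hiR])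
      · refine Finset.sum_eq_zero (fun c _ => ?_)
        obtain ⟨⟨k', i', j'⟩, hc⟩ := c
        rw [colFam_row]
        suffices h : ¬ ((⟨k, i⟩ : Σ k' : Fin ρ, Fin (ℓ k')) = ⟨k', i'⟩) by
          simp [h]
        intro h
        obtain ⟨hk, hi⟩ := Sigma.mk.inj_iff.1 h
        subst hk
        have hii : i = i' := by simpa using hi
        subst hii
        exact hiR (Finset.mem_image.2
          ⟨(i, j'), Finset.mem_filter.2 ⟨Finset.mem_univ _, hc⟩, rfl⟩)
    · by_cases hjTD : j ∈ TD k
      · exact hg' _ (by simp [hDfin, Finset.mem_sigma, hjTD])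
      · by_cases hjT : j ∈ Ts k
        · have hTne : (Ts k).Nonempty := ⟨j, hjT⟩
          have hjmin : j = (Ts k).min' hTne := by
            by_contra hne
            refine hjTD ?_
            rw [hTD]
            simp only [dif_pos hTne]
            exact Finset.mem_erase.2 ⟨hne, hjT⟩
          have hTDmem : ∀ j', j' ∈ TD k ↔ (j' ≠ j ∧ j' ∈ Ts k) := by
            intro j'
            rw [hTD]
            simp only [dif_pos hTne]
            rw [Finset.mem_erase, hjmin]
          have hkey : ∀ c : {p : Σ k : Fin ρ, Fin (ℓ k) × Fin τ // p ∈ S},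
              colFam ℓ C S c (Sum.inr ⟨k, Sum.inr j⟩)
                = (∑ i ∈ Rs k, colFam ℓ C S c (Sum.inr ⟨k, Sum.inl i⟩))
                  - ∑ j' ∈ TD k, colFam ℓ C S c (Sum.inr ⟨k, Sum.inr j'⟩) := by
            rintro ⟨⟨k', i', j'⟩, hc⟩
            by_cases hk : k = k'
            · subst hk
              have hiR : i' ∈ Rs k := Finset.mem_image.2
                ⟨(i', j'), Finset.mem_filter.2 ⟨Finset.mem_univ _, hc⟩, rfl⟩
              have hjT' : j' ∈ Ts k := Finset.mem_image.2
                ⟨(i', j'), Finset.mem_filter.2 ⟨Finset.mem_univ _, hc⟩, rfl⟩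
              have hrowsum :
                  (∑ i ∈ Rs k, colFam ℓ C S ⟨⟨k, (i', j')⟩, hc⟩
                    (Sum.inr ⟨k, Sum.inl i⟩)) = 1 := by
                have : ∀ i : Fin (ℓ k),
                    colFam ℓ C S ⟨⟨k, (i', j')⟩, hc⟩ (Sum.inr ⟨k, Sum.inl i⟩)
                      = if i = i' then (1 : ℚ) else 0 := by
                  intro i
                  rw [colFam_row]
                  congr 1
                  simp [Sigma.mk.inj_iff]
                simp only [this]
                rw [Finset.sum_ite_eq' (Rs k) i' (fun _ => (1 : ℚ))]
                simp [hiR]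
              have hcolsum :
                  (∑ j'' ∈ TD k, colFam ℓ C S ⟨⟨k, (i', j')⟩, hc⟩
                    (Sum.inr ⟨k, Sum.inr j''⟩))
                    = if j' ∈ TD k then (1 : ℚ) else 0 := by
                have : ∀ j'' : Fin τ,
                    colFam ℓ C S ⟨⟨k, (i', j')⟩, hc⟩ (Sum.inr ⟨k, Sum.inr j''⟩)
                      = if j'' = j' then (1 : ℚ) else 0 := by
                  intro j''
                  rw [colFam_col]
                  congr 1
                  simp
                simp only [this]
                exact Finset.sum_ite_eq' (TD k) j' (fun _ => (1 : ℚ))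
              rw [hrowsum, hcolsum, colFam_col]
              by_cases hjj : j = j'
              · have : j' ∉ TD k := by
                  rw [hTDmem]
                  simp [hjj]
                simp [hjj, this]
              · have : j' ∈ TD k := (hTDmem j').2 ⟨fun h => hjj h.symm, hjT'⟩
                simp [hjj, this]
            · have h1 : ∀ i : Fin (ℓ k),
                  colFam ℓ C S ⟨⟨k', (i', j')⟩, hc⟩ (Sum.inr ⟨k, Sum.inl i⟩)
                    = 0 := by
                intro i
                rw [colFam_row]
                have : ¬ ((⟨k, i⟩ : Σ k'' : Fin ρ, Fin (ℓ k'')) = ⟨k', i'⟩) :=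
                  fun h => hk (Sigma.mk.inj_iff.1 h).1
                simp [this]
              have h2 : ∀ j'' : Fin τ,
                  colFam ℓ C S ⟨⟨k', (i', j')⟩, hc⟩ (Sum.inr ⟨k, Sum.inr j''⟩)
                    = 0 := by
                intro j''
                rw [colFam_col]
                simp [hk]
              rw [colFam_col]
              simp [hk, h1, h2]
          calc ∑ c, g c * colFam ℓ C S c (Sum.inr ⟨k, Sum.inr j⟩)
              = ∑ c, ((∑ i ∈ Rs k, g c * colFam ℓ C S c (Sum.inr ⟨k, Sum.inl i⟩))
                  - ∑ j' ∈ TD k, g c * colFam ℓ C S c (Sum.inr ⟨k, Sum.inr j'⟩)) := by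
                refine Finset.sum_congr rfl fun c _ => ?_
                rw [← Finset.mul_sum, ← Finset.mul_sum, ← mul_sub, hkey c]
            _ = (∑ i ∈ Rs k, ∑ c, g c * colFam ℓ C S c (Sum.inr ⟨k, Sum.inl i⟩))
                  - ∑ j' ∈ TD k, ∑ c, g c * colFam ℓ C S c (Sum.inr ⟨k, Sum.inr j'⟩) := by
                rw [Finset.sum_sub_distrib, Finset.sum_comm, Finset.sum_comm
                  (s := (Finset.univ : Finset {p : Σ k : Fin ρ,
                    Fin (ℓ k) × Fin τ // p ∈ S}))]
            _ = 0 := by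
                rw [Finset.sum_congr rfl
                  (fun i hi => hg' (Sum.inr ⟨k, Sum.inl i⟩)
                    (by simp [hDfin, Finset.mem_sigma, hi])),
                  Finset.sum_congr rfl
                  (fun j' hj' => hg' (Sum.inr ⟨k, Sum.inr j'⟩)
                    (by simp [hDfin, Finset.mem_sigma, hj']))]
                simp
        · refine Finset.sum_eq_zero (fun c _ => ?_)
          obtain ⟨⟨k', i', j'⟩, hc⟩ := c
          rw [colFam_col]
          suffices h : ¬ (k = k' ∧ j = j') by simp [h]
          rintro ⟨hk, hj⟩
          subst hk; subst hj
          exact hjT (Finset.mem_image.2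
            ⟨(i', j), Finset.mem_filter.2 ⟨Finset.mem_univ _, hc⟩, rfl⟩)
  -- conclude by dimension counting
  have hcard1 : S.card ≤ Dfin.card := by
    have h := hw.fintype_card_le_finrank
    rwa [Module.finrank_fintype_fun_eq_card, Fintype.card_coe, Fintype.card_coe] at h
  have h1 : (2 * τ + 1) * Dfin.card ≤ (2 * τ + 1) * s + 2 * τ * S.card := by
    rw [hDcard, Nat.mul_add]
    refine Nat.add_le_add_left ?_ _
    calc (2 * τ + 1) * ∑ k, ((Rs k).card + (TD k).card)
        = ∑ k, (2 * τ + 1) * ((Rs k).card + (TD k).card) := Finset.mul_sum _ _ _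
      _ ≤ ∑ k, 2 * τ * (Sk k).card := Finset.sum_le_sum (fun k _ => hblock k)
      _ = 2 * τ * S.card := by rw [← Finset.mul_sum, hsumS]
  have h2 : (2 * τ + 1) * S.card ≤ (2 * τ + 1) * Dfin.card :=
    Nat.mul_le_mul_left _ hcard1
  nlinarith [h1, h2]
end

section
/- Let I be a finite index set, let (x_j)_{j∈I} be rational numbers with ∑_{j∈I}(x_j − ⌊x_j⌋) = γ ∈ ℤ, and suppose weights (w_j)_{j∈I} are sorted non-decreasingly. Define x̃_j = ⌈x_j⌉ for the γ indices with smallest weights among the fractional ones, and x̃_j = ⌊x_j⌋ otherwise. Then ∑_{j∈I} x̃_j = ∑_{j∈I} x_j, ⌊x_j⌋ ≤ x̃_j ≤ ⌈x_j⌉ for all j, and ∑_{j∈I} w_j x̃_j ≤ ∑_{j∈I} w_j x_j provided the w_j corresponding to rounded-up variables are each at most the w_j of any rounded-down variable. -/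
/-- Greedy rounding: if the fractional parts over a group sum to an integer `γ` and we
round up a set `U` of `γ` fractional variables (those of smallest weight) and round
down the rest, the group sum is preserved, each variable stays within its floor and
ceiling, and the weighted sum does not increase. -/
theorem stmt_10 {ι : Type*} [DecidableEq ι] (I : Finset ι) (x w : ι → ℚ) (γ : ℤ)
    (hγ : ∑ j ∈ I, (x j - ⌊x j⌋) = (γ : ℚ))
    (F : Finset ι) (hF : F = I.filter (fun j => (x j).den ≠ 1))
    (U : Finset ι) (hUF : U ⊆ F) (hUcard : (U.card : ℤ) = γ)
    (xt : ι → ℚ) (hxt : ∀ j, xt j = if j ∈ U then (⌈x j⌉ : ℚ) else (⌊x j⌋ : ℚ))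
    (hw : ∀ j ∈ U, ∀ j' ∈ F \ U, w j ≤ w j') :
    (∑ j ∈ I, xt j = ∑ j ∈ I, x j) ∧
    (∀ j, (⌊x j⌋ : ℚ) ≤ xt j ∧ xt j ≤ (⌈x j⌉ : ℚ)) ∧
    (∑ j ∈ I, w j * xt j ≤ ∑ j ∈ I, w j * x j) := by
  have hFI : F ⊆ I := by rw [hF]; exact Finset.filter_subset _ _
  have hUI : U ⊆ I := hUF.trans hFI
  set f : ι → ℚ := fun j => x j - ⌊x j⌋ with hfdef
  have hf0 : ∀ j, 0 ≤ f j := fun j => sub_nonneg.2 (Int.floor_le _)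
  have hf1 : ∀ j, f j < 1 := fun j => sub_lt_iff_lt_add.2 (by
    have := Int.lt_floor_add_one (x j); push_cast at this ⊢; linarith)
  have hnotF : ∀ j ∈ I, j ∉ F → f j = 0 := by
    intro j hj hjF
    rw [hF, Finset.mem_filter] at hjF
    push_neg at hjF
    have h1 := hjF hj
    have h2 : ((x j).num : ℚ) = x j := Rat.coe_int_num_of_den_eq_one h1
    have h3 : ⌊x j⌋ = (x j).num := by rw [← h2]; exact Int.floor_intCast _
    simp only [hfdef]
    rw [h3, h2]; ring
  have hFpos : ∀ j ∈ F, 0 < f j := by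
    intro j hj
    rw [hF, Finset.mem_filter] at hj
    rcases lt_or_eq_of_le (hf0 j) with h | h
    · exact h
    · exfalso
      have h' := h.symm
      simp only [hfdef] at h'
      have : x j = (⌊x j⌋ : ℚ) := by linarith
      have : (x j).den = 1 := by rw [this]; exact Rat.den_intCast _
      exact hj.2 this
  have hceil : ∀ j ∈ F, (⌈x j⌉ : ℚ) = (⌊x j⌋ : ℚ) + 1 := by
    intro j hj
    have h1 : ⌈x j⌉ ≤ ⌊x j⌋ + 1 := Int.ceil_le_floor_add_one _
    have h2 : (⌊x j⌋ : ℚ) < x j := by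
      have h' := hFpos j hj; simp only [hfdef] at h'; linarith
    have h3 : (⌊x j⌋ : ℚ) < (⌈x j⌉ : ℚ) := lt_of_lt_of_le h2 (Int.le_ceil _)
    have h4 : ⌊x j⌋ < ⌈x j⌉ := by exact_mod_cast h3
    have : ⌈x j⌉ = ⌊x j⌋ + 1 := le_antisymm h1 h4
    rw [this]; push_cast; ring
  have hsumF : ∑ j ∈ F, f j = (γ : ℚ) := by
    rw [← hγ, ← Finset.sum_subset hFI (fun j hj hjF => hnotF j hj hjF)]
  -- Part 1
  have part1 : ∑ j ∈ I, xt j = ∑ j ∈ I, x j := by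
    have key : ∑ j ∈ I, xt j = ∑ j ∈ I, ((⌊x j⌋ : ℚ) + if j ∈ U then 1 else 0) := by
      apply Finset.sum_congr rfl
      intro j hj
      rw [hxt j]
      by_cases h : j ∈ U
      · simp [h, hceil j (hUF h)]
      · simp [h]
    rw [key, Finset.sum_add_distrib]
    have hcard : ∑ j ∈ I, (if j ∈ U then (1:ℚ) else 0) = (γ : ℚ) := by
      rw [Finset.sum_ite_mem, Finset.inter_eq_right.2 hUI, Finset.sum_const, nsmul_eq_mul,
        mul_one, ← hUcard]
      push_cast; ring
    have hfl : ∑ j ∈ I, ((⌊x j⌋ : ℚ)) = ∑ j ∈ I, x j - (γ : ℚ) := by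
      rw [← hγ, Finset.sum_sub_distrib]; ring
    rw [hcard, hfl]; ring
  refine ⟨part1, fun j => ?_, ?_⟩
  · rw [hxt j]
    by_cases h : j ∈ U
    · rw [if_pos h]
      exact ⟨by exact_mod_cast Int.floor_le_ceil (x j), le_refl _⟩
    · rw [if_neg h]
      exact ⟨le_refl _, by exact_mod_cast Int.floor_le_ceil (x j)⟩
  -- Part 3
  · rw [← sub_nonneg, ← Finset.sum_sub_distrib]
    have key : ∑ j ∈ I, (w j * x j - w j * xt j)
        = ∑ j ∈ I, w j * f j - ∑ j ∈ U, w j := by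
      have : ∀ j ∈ I, w j * x j - w j * xt j
          = w j * f j - (if j ∈ U then w j else 0) := by
        intro j hj
        rw [hxt j]
        by_cases h : j ∈ U
        · simp only [h, if_pos, hceil j (hUF h)]
          simp only [hfdef]; ring
        · simp only [h, if_neg, not_false_iff]
          simp only [hfdef]; ring
      rw [Finset.sum_congr rfl this, Finset.sum_sub_distrib,
        Finset.sum_ite_mem, Finset.inter_eq_right.2 hUI]
    rw [key, sub_nonneg]
    have hsplit : ∑ j ∈ I, w j * f j = ∑ j ∈ U, w j * f j + ∑ j ∈ F \ U, w j * f j := by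
      rw [← Finset.sum_union Finset.sdiff_disjoint.symm, Finset.union_sdiff_of_subset hUF]
      exact (Finset.sum_subset hFI (fun j hj hjF => by rw [hnotF j hj hjF, mul_zero])).symm
    rw [hsplit]
    -- goal: ∑ U w ≤ ∑ U w f + ∑ F\U w f, i.e. ∑ U w (1-f) ≤ ∑ F\U w f
    rcases Finset.eq_empty_or_nonempty U with hU | hU
    · -- then γ = 0, so ∑_F f = 0, so F = ∅
      have hγ0 : (γ : ℚ) = 0 := by rw [← hUcard, hU]; simp
      have hFe : F = ∅ := by
        by_contra h
        rcases Finset.nonempty_iff_ne_empty.2 h with ⟨j, hj⟩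
        have hpos : 0 < ∑ j ∈ F, f j :=
          Finset.sum_pos' (fun i hi => hf0 i) ⟨j, hj, hFpos j hj⟩
        rw [hsumF, hγ0] at hpos
        exact lt_irrefl _ hpos
      simp [hU, hFe]
    · have hFU : (F \ U).Nonempty := by
        by_contra h
        rw [Finset.not_nonempty_iff_eq_empty] at h
        have hFeqU : F = U := by
          apply Finset.Subset.antisymm _ hUF
          intro j hj
          by_contra hjU
          exact absurd (Finset.mem_sdiff.2 ⟨hj, hjU⟩) (by rw [h]; simp)
        -- then ∑_U f = γ = |U|, but f < 1 strictly for each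
        have h1 : ∑ j ∈ U, f j < ∑ j ∈ U, (1:ℚ) :=
          Finset.sum_lt_sum_of_nonempty hU (fun j hj => hf1 j)
        rw [Finset.sum_const, nsmul_eq_mul, mul_one] at h1
        have hsUf : ∑ j ∈ U, f j = (γ : ℚ) := hFeqU ▸ hsumF
        have h2 : ((U.card : ℤ) : ℚ) = (γ : ℚ) := by exact_mod_cast hUcard
        push_cast at h2
        linarith
      obtain ⟨j0, hj0, hmin⟩ := Finset.exists_min_image (F \ U) w hFU
      have hsU : ∑ j ∈ U, (1 - f j) = ∑ j ∈ F \ U, f j := by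
        have hsplit2 : ∑ j ∈ U, f j + ∑ j ∈ F \ U, f j = (γ : ℚ) := by
          rw [← Finset.sum_union Finset.sdiff_disjoint.symm,
            Finset.union_sdiff_of_subset hUF, hsumF]
        have hc : ((U.card : ℤ) : ℚ) = (γ : ℚ) := by exact_mod_cast hUcard
        push_cast at hc
        rw [Finset.sum_sub_distrib, Finset.sum_const, nsmul_eq_mul, mul_one, hc]
        linarith
      have step1 : ∑ j ∈ U, w j * (1 - f j) ≤ ∑ j ∈ U, w j0 * (1 - f j) := by
        apply Finset.sum_le_sum
        intro j hj
        exact mul_le_mul_of_nonneg_right (hw j hj j0 hj0) (by linarith [hf1 j])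
      have step2 : ∑ j ∈ F \ U, w j0 * f j ≤ ∑ j ∈ F \ U, w j * f j := by
        apply Finset.sum_le_sum
        intro j hj
        exact mul_le_mul_of_nonneg_right (hmin j hj) (hf0 j)
      have e1 : ∑ j ∈ U, w j0 * (1 - f j) = ∑ j ∈ F \ U, w j0 * f j := by
        rw [← Finset.mul_sum, ← Finset.mul_sum, hsU]
      have e2 : ∑ j ∈ U, w j * (1 - f j) = ∑ j ∈ U, w j - ∑ j ∈ U, w j * f j := by
        rw [← Finset.sum_sub_distrib]
        exact Finset.sum_congr rfl (fun j _ => by ring)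
      linarith
end

section
/- Let x be a feasible solution to the system A x = b_A, C x = b_C, l ≤ x ≤ u, where restricted to the columns in nisupp(x) = {j : x_j ∉ ℤ}, the matrix A (stacked with C) has the property that the nullity of A restricted to those columns strictly exceeds the rank of C restricted to those columns. Then there exists a nonzero vector g with supp(g) ⊆ nisupp(x), A g = 0, and C g = 0; consequently x is not a vertex of the polyhedron {x : A x = b_A, C x = b_C, l ≤ x ≤ u} unless some coordinate of x in nisupp(x) equals its bound. -/
/-!
Write `A_S`, `C_S` for the column restrictions to `S`. By rank–nullity, restricting `C_S` to
`ker A_S` leaves a kernel of dimension at least `dim ker A_S - rank C_S > 0`; a nonzero vector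
in it, extended by zero off `S`, is the direction `g`. Moving `x` along `±t g` for small `t`
preserves the equations and, since only coordinates strictly inside their bounds move, the box
constraints, so `x` is the midpoint of two distinct feasible points.
-/

open Filter Topology Matrix

theorem LinearMap.exists_ne_zero_apply_eq_zero_of_finrank_range_lt
    {K V W₁ W₂ : Type*} [DivisionRing K] [AddCommGroup V] [Module K V] [FiniteDimensional K V]
    [AddCommGroup W₁] [Module K W₁] [AddCommGroup W₂] [Module K W₂]
    (f : V →ₗ[K] W₁) (g : V →ₗ[K] W₂)
    (h : Module.finrank K (LinearMap.range g) < Module.finrank K (LinearMap.ker f)) :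
    ∃ v, v ≠ 0 ∧ f v = 0 ∧ g v = 0 := by
  have hrange : Module.finrank K (LinearMap.range (g.domRestrict (LinearMap.ker f))) ≤
      Module.finrank K (LinearMap.range g) :=
    Submodule.finrank_mono (LinearMap.range_domRestrict_le_range g _)
  have hker : 0 < Module.finrank K (LinearMap.ker (g.domRestrict (LinearMap.ker f))) := by
    have := (g.domRestrict (LinearMap.ker f)).finrank_range_add_finrank_ker
    omega
  obtain ⟨⟨⟨v, hvf⟩, hvg⟩, hv0⟩ := Module.finrank_pos_iff_exists_ne_zero.mp hker
  exact ⟨v, fun hv => hv0 (by simp [hv]), hvf, hvg⟩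

theorem Matrix.mulVec_dite_mem {m n R : Type*} [Fintype n] [DecidableEq n]
    [NonUnitalNonAssocSemiring R] (M : Matrix m n R) (s : Finset n) (v : s → R) :
    M *ᵥ (fun j => if h : j ∈ s then v ⟨j, h⟩ else 0) = M.submatrix id Subtype.val *ᵥ v := by
  ext i
  rw [mulVec, dotProduct, ← Finset.sum_subset (Finset.subset_univ s)
    (fun j _ hj => by rw [dif_neg hj, mul_zero]), ← Finset.sum_coe_sort s]
  exact Fintype.sum_congr _ _ fun j => by rw [dif_pos j.2]; rfl

theorem notMem_extremePoints_of_eventually_add_smul_mem {𝕜 E : Type*} [Field 𝕜] [LinearOrder 𝕜]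
    [IsStrictOrderedRing 𝕜] [TopologicalSpace 𝕜] [OrderTopology 𝕜] [AddCommGroup E] [Module 𝕜 E]
    {A : Set E} {x g : E} (hg : g ≠ 0) (h : ∀ᶠ t in 𝓝 (0 : 𝕜), x + t • g ∈ A) :
    x ∉ Set.extremePoints 𝕜 A := by
  intro hx
  have hneg : ∀ᶠ t in 𝓝 (0 : 𝕜), x + (-t) • g ∈ A :=
    (continuous_neg.tendsto' 0 0 neg_zero).eventually h
  obtain ⟨ε, ⟨hε₁, hε₂⟩, hε⟩ :=
    ((h.and hneg).filter_mono nhdsWithin_le_nhds |>.and self_mem_nhdsWithin).exists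
      (f := 𝓝[>] (0 : 𝕜))
  have hseg : x ∈ openSegment 𝕜 (x + ε • g) (x + (-ε) • g) :=
    ⟨1/2, 1/2, by norm_num, by norm_num, by norm_num, by module⟩
  have := hx.2 hε₁ hε₂ hseg
  exact hg (by simpa [(Set.mem_Ioi.mp hε).ne'] using this)

theorem eventually_forall_le_add_smul_le {𝕜 ι : Type*} [Field 𝕜] [LinearOrder 𝕜]
    [IsStrictOrderedRing 𝕜] [TopologicalSpace 𝕜] [OrderTopology 𝕜] [Finite ι]
    {l u x g : ι → 𝕜} (hbox : ∀ j, l j ≤ x j ∧ x j ≤ u j)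
    (hint : ∀ j, g j ≠ 0 → l j < x j ∧ x j < u j) :
    ∀ᶠ t in 𝓝 (0 : 𝕜), ∀ j, l j ≤ (x + t • g) j ∧ (x + t • g) j ≤ u j := by
  refine Filter.eventually_all.mpr fun j => ?_
  by_cases hgj : g j = 0
  · simpa [hgj] using hbox j
  have hlim : Tendsto (fun t : 𝕜 => x j + t * g j) (𝓝 0) (𝓝 (x j)) := by
    simpa using ((continuous_id.mul continuous_const).const_add (x j)).tendsto (0 : 𝕜)
  filter_upwards [hlim.eventually_const_lt (hint j hgj).1,
    hlim.eventually_lt_const (hint j hgj).2] with t htl htu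
  exact ⟨htl.le, htu.le⟩

theorem stmt_19_general {mA mC n : ℕ} (A : Matrix (Fin mA) (Fin n) ℚ)
    (C : Matrix (Fin mC) (Fin n) ℚ) (bA : Fin mA → ℚ) (bC : Fin mC → ℚ)
    (l u x : Fin n → ℚ)
    (S : Finset (Fin n))
    (hnr : (C.submatrix id (fun j : {j : Fin n // j ∈ S} => j.val)).rank <
      Module.finrank ℚ
        ↥(LinearMap.ker (A.submatrix id (fun j : {j : Fin n // j ∈ S} => j.val)).mulVecLin)) :
    (∃ g : Fin n → ℚ, g ≠ 0 ∧ (∀ j ∉ S, g j = 0) ∧ A.mulVec g = 0 ∧ C.mulVec g = 0) ∧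
      ((∀ j ∈ S, l j < x j ∧ x j < u j) →
        x ∉ Set.extremePoints ℚ
          {z : Fin n → ℚ | A.mulVec z = bA ∧ C.mulVec z = bC ∧
            ∀ j, l j ≤ z j ∧ z j ≤ u j}) := by
  obtain ⟨v, hv0, hvA, hvC⟩ :=
    LinearMap.exists_ne_zero_apply_eq_zero_of_finrank_range_lt _ _ hnr
  set g : Fin n → ℚ := fun j => if h : j ∈ S then v ⟨j, h⟩ else 0
  have hgS : ∀ j ∉ S, g j = 0 := fun j hj => dif_neg hj
  have hg0 : g ≠ 0 := by
    obtain ⟨j, hj⟩ := Function.ne_iff.mp hv0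
    exact Function.ne_iff.mpr ⟨j, by simpa [g] using hj⟩
  have hAg : A *ᵥ g = 0 := by rw [mulVec_dite_mem]; exact hvA
  have hCg : C *ᵥ g = 0 := by rw [mulVec_dite_mem]; exact hvC
  refine ⟨⟨g, hg0, hgS, hAg, hCg⟩, fun hint hx => ?_⟩
  obtain ⟨hxA, hxC, hbox⟩ := hx.1
  have hgint : ∀ j, g j ≠ 0 → l j < x j ∧ x j < u j := fun j hj =>
    hint j (by_contra fun hjS => hj (hgS j hjS))
  refine notMem_extremePoints_of_eventually_add_smul_mem hg0 ?_ hx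
  filter_upwards [eventually_forall_le_add_smul_le hbox hgint] with t ht
  refine ⟨?_, ?_, ht⟩ <;>
    simp only [mulVec_add, mulVec_smul, hAg, hCg, smul_zero, add_zero, hxA, hxC]

/-- If, on the non-integral support of a feasible `x`, the nullity of `A` exceeds the
rank of `C`, then there is a nonzero combined-kernel vector supported there; hence,
unless some non-integral coordinate sits at a bound, `x` is not a vertex. -/
theorem stmt_19 {mA mC n : ℕ} (A : Matrix (Fin mA) (Fin n) ℚ)
    (C : Matrix (Fin mC) (Fin n) ℚ) (bA : Fin mA → ℚ) (bC : Fin mC → ℚ)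
    (l u x : Fin n → ℚ)
    (hxA : A.mulVec x = bA) (hxC : C.mulVec x = bC)
    (hbox : ∀ j, l j ≤ x j ∧ x j ≤ u j)
    (S : Finset (Fin n)) (hS : S = Finset.univ.filter (fun j => (x j).den ≠ 1))
    (hnr : (C.submatrix id (fun j : {j : Fin n // j ∈ S} => j.val)).rank <
      Module.finrank ℚ
        ↥(LinearMap.ker (A.submatrix id (fun j : {j : Fin n // j ∈ S} => j.val)).mulVecLin)) :
    (∃ g : Fin n → ℚ, g ≠ 0 ∧ (∀ j ∉ S, g j = 0) ∧ A.mulVec g = 0 ∧ C.mulVec g = 0) ∧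
      ((∀ j ∈ S, l j < x j ∧ x j < u j) →
        x ∉ Set.extremePoints ℚ
          {z : Fin n → ℚ | A.mulVec z = bA ∧ C.mulVec z = bC ∧
            ∀ j, l j ≤ z j ∧ z j ≤ u j}) :=
  stmt_19_general A C bA bC l u x S hnr
end
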